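/- Let n ≥ 1 and let J = diag(1, −1, …, −1) be the (n+1)×(n+1) complex diagonal matrix of signature (1,n). Let g be an (n+1)×(n+1) complex matrix (indices 0,…,n) satisfying ḡᵀ J g = J. For z ∈ ℂⁿ set j(g,z) = g₀₀ + Σ_{k=1}^{n} g₀ₖ zₖ, and define the fractional linear action φ(z) ∈ ℂⁿ by φ(z)ᵢ = (gᵢ₀ + Σ_{k=1}^{n} gᵢₖ zₖ)/j(g,z) for i = 1,…,n. Then for every z ∈ ℂⁿ with j(g,z) ≠ 0, the map φ is complex differentiable at z and the determinant of its derivative (as a ℂ-linear endomorphism of ℂⁿ) equals det(g) · j(g,z)^{−(n+1)}. -/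

import Mathlib

/-! In the affine chart `w ↦ (1, w)` the matrix `g` acts by `g *ᵥ (1, z) = j(g,z) • (1, φ z)`.
Write `G` for the lower right `n × n` block of `g` and `b` for the rest of its top row; differentiating
the quotient gives `Dφ(z) = j⁻¹ • (G - φ(z) bᵀ)`. Replacing the first column of `g` by
`g *ᵥ (1, z) = j • (1, φ z)` does not change the determinant, and once the factor `j` is pulled out,
the Schur complement of the corner entry `1` is `G - φ(z) bᵀ`. Hence
`det g = j * det (G - φ(z) bᵀ) = j ^ (n + 1) * det Dφ(z)`. -/

open Matrix

section Calculus

variable {𝕜 E F : Type*} [NontriviallyNormedField 𝕜] [NormedAddCommGroup E] [NormedSpace 𝕜 E]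
  [NormedAddCommGroup F] [NormedSpace 𝕜 F]

theorem hasFDerivAt_inv_smul_affine (a : 𝕜) (ℓ : E →L[𝕜] 𝕜) (c : F) (L : E →L[𝕜] F) {x : E}
    (hx : a + ℓ x ≠ 0) :
    HasFDerivAt (fun y => (a + ℓ y)⁻¹ • (c + L y))
      ((a + ℓ x)⁻¹ • (L - ℓ.smulRight ((a + ℓ x)⁻¹ • (c + L x)))) x := by
  have hinv := (hasFDerivAt_inv hx).comp x (ℓ.hasFDerivAt.const_add a)
  refine (hinv.smul (L.hasFDerivAt.const_add c)).congr_fderiv ?_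
  ext v
  simp only [Function.comp_apply, _root_.add_apply, _root_.smul_apply, _root_.sub_apply,
    ContinuousLinearMap.smulRight_apply, ContinuousLinearMap.comp_apply,
    ContinuousLinearMap.toSpanSingleton_apply, smul_eq_mul, mul_neg, smul_add, neg_smul]
  generalize a + ℓ x = t
  module

theorem Matrix.hasFDerivAt_inv_dotProduct_smul_mulVec [CompleteSpace 𝕜] {m n : Type*}
    [Fintype m] [Fintype n] [DecidableEq n] (a : 𝕜) (b : n → 𝕜) (c : m → 𝕜) (G : Matrix m n 𝕜)
    {x : n → 𝕜} (hx : a + b ⬝ᵥ x ≠ 0) :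
    HasFDerivAt (fun y => (a + b ⬝ᵥ y)⁻¹ • (c + G *ᵥ y))
      (toLin' ((a + b ⬝ᵥ x)⁻¹ •
        (G - vecMulVec ((a + b ⬝ᵥ x)⁻¹ • (c + G *ᵥ x)) b))).toContinuousLinearMap x := by
  refine (hasFDerivAt_inv_smul_affine a (dotProductBilin 𝕜 𝕜 b).toContinuousLinearMap c
    (toLin' G).toContinuousLinearMap hx).congr_fderiv ?_
  ext v
  simp [vecMulVec_mulVec]

end Calculus

namespace Matrix

variable {R : Type*} [CommRing R]

theorem det_updateCol_mulVec {m : Type*} [Fintype m] [DecidableEq m] (A : Matrix m m R) (j : m)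
    (c : m → R) : (A.updateCol j (A *ᵥ c)).det = c j * A.det := by
  have hcol : A *ᵥ c = fun k => ∑ i, c i • A k i := by
    ext k
    simp [mulVec, dotProduct, mul_comm]
  rw [hcol, det_updateCol_sum, smul_eq_mul]

theorem det_updateCol_zero_cons_one {n : ℕ} (M : Matrix (Fin (n + 1)) (Fin (n + 1)) R)
    (v : Fin n → R) :
    (M.updateCol 0 (Fin.cons 1 v)).det =
      (M.submatrix Fin.succ Fin.succ - vecMulVec v fun k : Fin n => M 0 k.succ).det := by
  let e : Fin (n + 1) ≃ Fin n ⊕ Unit := (finSuccEquiv n).trans (Equiv.optionEquivSumPUnit _)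
  have hblocks : reindex e e (M.updateCol 0 (Fin.cons 1 v)) =
      fromBlocks (M.submatrix Fin.succ Fin.succ) (replicateCol Unit v)
        (replicateRow Unit fun k => M 0 k.succ) 1 := by
    ext (i | i) (k | k) <;> simp [e]
  rw [← det_reindex_self e, hblocks, det_fromBlocks_one₂₂, vecMulVec_eq Unit]

theorem det_eq_mul_det_sub_vecMulVec {n : ℕ} (g : Matrix (Fin (n + 1)) (Fin (n + 1)) R)
    {z v : Fin n → R} {t : R} (h : g *ᵥ Fin.cons 1 z = t • Fin.cons 1 v) :
    g.det = t * (g.submatrix Fin.succ Fin.succ - vecMulVec v fun k : Fin n => g 0 k.succ).det :=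
  calc g.det = (Fin.cons 1 z : Fin (n + 1) → R) 0 * g.det := by rw [Fin.cons_zero, one_mul]
    _ = (g.updateCol 0 (g *ᵥ Fin.cons 1 z)).det := (det_updateCol_mulVec g 0 _).symm
    _ = _ := by rw [h, det_updateCol_smul, det_updateCol_zero_cons_one]

end Matrix

theorem jacobian_of_ball_action (n : ℕ)
    (g : Matrix (Fin (n + 1)) (Fin (n + 1)) ℂ)
    (j : (Fin n → ℂ) → ℂ)
    (hj : ∀ z : Fin n → ℂ, j z = g 0 0 + ∑ k : Fin n, g 0 k.succ * z k)
    (φ : (Fin n → ℂ) → (Fin n → ℂ))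
    (hφ : ∀ (z : Fin n → ℂ) (i : Fin n),
      φ z i = (g i.succ 0 + ∑ k : Fin n, g i.succ k.succ * z k) / j z)
    (z : Fin n → ℂ) (hz : j z ≠ 0) :
    ∃ D : (Fin n → ℂ) →L[ℂ] (Fin n → ℂ),
      HasFDerivAt φ D z ∧
        LinearMap.det (D : (Fin n → ℂ) →ₗ[ℂ] (Fin n → ℂ)) =
          g.det * (j z) ^ (-(n + 1 : ℤ)) := by
  set G := g.submatrix Fin.succ Fin.succ
  set b : Fin n → ℂ := fun k => g 0 k.succ
  set c : Fin n → ℂ := fun i => g i.succ 0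
  have hjz : j z = g 0 0 + b ⬝ᵥ z := hj z
  have hφ' : φ = fun w => (g 0 0 + b ⬝ᵥ w)⁻¹ • (c + G *ᵥ w) := by
    funext w i
    simp [hφ, hj, mulVec, dotProduct, div_eq_inv_mul, G, b, c]
  have hφz : φ z = (j z)⁻¹ • (c + G *ᵥ z) := by rw [hφ', hjz]
  have hcol : g *ᵥ Fin.cons 1 z = j z • Fin.cons 1 (φ z) := by
    ext i
    cases i using Fin.cases
    · simp [mulVec, dotProduct, Fin.sum_univ_succ, hj]
    · simp [mulVec, dotProduct, Fin.sum_univ_succ, hφ, mul_div_cancel₀ _ hz]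
  have hderiv := hasFDerivAt_inv_dotProduct_smul_mulVec (g 0 0) b c G (hjz ▸ hz)
  rw [← hφ', ← hjz, ← hφz] at hderiv
  refine ⟨_, hderiv, ?_⟩
  rw [LinearMap.coe_toContinuousLinearMap, LinearMap.det_toLin', det_smul, Fintype.card_fin,
    det_eq_mul_det_sub_vecMulVec g hcol, _root_.zpow_neg, zpow_add₀ hz, zpow_natCast, zpow_one,
    mul_inv, inv_pow]
  generalize (G - vecMulVec (φ z) b).det = d
  field_simp
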